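/- Identification of the incremental effect for one time point (weighting form): Under consistency and exchangeability, with π(X) = P(A=1|X), E[Y^Q] = E[ Y(δA + 1 - A) / (δπ(X) + 1 - π(X)) ], where Y^Q is the counterfactual outcome under the incremental propensity score intervention with parameter δ ∈ (0, ∞). -/

import Mathlib

/-!
By consistency the weighted outcome `Y (δA + 1 - A) / (δπ(X) + 1 - π(X))` equals
`δ w A Y¹ + w (1 - A) Y⁰` with `w = 1 / (δπ(X) + 1 - π(X))`, which is `σ(X)`-measurable and
bounded because `π(X) ∈ [0, 1]`. Conditioning on `X`, the weight `w` comes out of the conditional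
expectation and exchangeability factors `E[A Y¹ | X] = π(X) E[Y¹ | X]` and
`E[(1 - A) Y⁰ | X] = (1 - π(X)) E[Y⁰ | X]`; so the conditional expectation of the weighted outcome
is the integrand on the left, and the tower property finishes the proof.
-/

open MeasureTheory ProbabilityTheory

namespace MeasureTheory

variable {Ω : Type*} {m mΩ : MeasurableSpace Ω} {μ : Measure Ω} [IsFiniteMeasure μ]
  {f : Ω → ℝ}

theorem condExp_one_sub (hm : m ≤ mΩ) (hf : Integrable f μ) :
    μ[1 - f | m] =ᵐ[μ] 1 - μ[f | m] := by
  have h := condExp_sub (m := m) (integrable_const (1 : ℝ)) hf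
  rwa [condExp_const hm] at h

theorem condExp_mem_Icc_zero_one (hm : m ≤ mΩ) (hf : AEStronglyMeasurable f μ)
    (hf01 : ∀ᵐ ω ∂μ, f ω ∈ Set.Icc 0 1) : ∀ᵐ ω ∂μ, μ[f | m] ω ∈ Set.Icc 0 1 := by
  have hfi : Integrable f μ :=
    (integrable_const 1).mono' hf (by
      filter_upwards [hf01] with ω hω using (Real.norm_of_nonneg hω.1).trans_le hω.2)
  have hle := condExp_mono (m := m) hfi (integrable_const 1) (by
    filter_upwards [hf01] with ω hω using hω.2)
  rw [condExp_const hm] at hle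
  filter_upwards [condExp_nonneg (m := m) (by filter_upwards [hf01] with ω hω using hω.1), hle]
    with ω h0 h1 using ⟨h0, h1⟩

end MeasureTheory

namespace ProbabilityTheory

variable {Ω : Type*} {m mΩ : MeasurableSpace Ω} [StandardBorelSpace Ω]
  {μ : Measure Ω} [IsFiniteMeasure μ] {hm : m ≤ mΩ}

theorem CondIndepFun.congr_ae {β γ : Type*} [MeasurableSpace β] [MeasurableSpace γ]
    {f f' : Ω → β} {g g' : Ω → γ} (hfg : CondIndepFun m hm f g μ)
    (hf : f =ᵐ[μ] f') (hg : g =ᵐ[μ] g') : CondIndepFun m hm f' g' μ := by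
  rw [← condExpKernel_comp_trim (μ := μ) hm] at hf hg
  exact Kernel.IndepFun.congr' hfg (Measure.ae_ae_of_ae_comp hf) (Measure.ae_ae_of_ae_comp hg)

/-- Exchanging "for all pairs of sets" and "for almost every `ω`" in the definition of conditional
independence relies on `β × γ` being countably generated. -/
theorem CondIndepFun.ae_indepFun_condExpKernel {β γ : Type*} [MeasurableSpace β]
    [MeasurableSpace γ] [MeasurableSpace.CountableOrCountablyGenerated Ω (β × γ)]
    {f : Ω → β} {g : Ω → γ} (hfg : CondIndepFun m hm f g μ) (hf : Measurable f)
    (hg : Measurable g) :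
    ∀ᵐ ω ∂μ, IndepFun f g (condExpKernel μ m ω) := by
  refine ae_of_ae_trim hm ?_
  filter_upwards [(condIndepFun_iff_map_prod_eq_prod_map_map hf hg).mp hfg] with ω hω
  rw [indepFun_iff_map_prod_eq_prod_map_map hf.aemeasurable hg.aemeasurable]
  simpa [Kernel.map_apply _ (hf.prodMk hg), Kernel.prod_apply, Kernel.map_apply _ hf,
    Kernel.map_apply _ hg] using hω

theorem CondIndepFun.condExp_mul {f g : Ω → ℝ} (hfg : CondIndepFun m hm f g μ)
    (hfi : Integrable f μ) (hgi : Integrable g μ) (hfgi : Integrable (f * g) μ) :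
    μ[f * g | m] =ᵐ[μ] μ[f | m] * μ[g | m] := by
  obtain ⟨f', hf', hff'⟩ := hfi.aemeasurable
  obtain ⟨g', hg', hgg'⟩ := hgi.aemeasurable
  have hfg' : f * g =ᵐ[μ] f' * g' := hff'.mul hgg'
  filter_upwards [(hfg.congr_ae hff' hgg').ae_indepFun_condExpKernel hf' hg',
    condExp_congr_ae hfg', condExp_congr_ae hff', condExp_congr_ae hgg',
    condExp_ae_eq_integral_condExpKernel hm ((integrable_congr hfg').mp hfgi),
    condExp_ae_eq_integral_condExpKernel hm ((integrable_congr hff').mp hfi),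
    condExp_ae_eq_integral_condExpKernel hm ((integrable_congr hgg').mp hgi)]
    with ω hind hcongr_fg hcongr_f hcongr_g hker_fg hker_f hker_g
  rw [hcongr_fg, hker_fg, Pi.mul_apply, hcongr_f, hcongr_g, hker_f, hker_g]
  exact hind.integral_mul_eq_mul_integral hf'.aestronglyMeasurable hg'.aestronglyMeasurable

theorem CondIndepFun.condExp_mul_mul_of_stronglyMeasurable {w f g : Ω → ℝ}
    (hfg : CondIndepFun m hm f g μ) (hw : StronglyMeasurable[m] w) (hfi : Integrable f μ)
    (hgi : Integrable g μ) (hfgi : Integrable (f * g) μ) (hwfgi : Integrable (w * (f * g)) μ) :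
    μ[w * (f * g) | m] =ᵐ[μ] w * (μ[f | m] * μ[g | m]) := by
  filter_upwards [condExp_mul_of_stronglyMeasurable_left hw hwfgi hfgi,
    hfg.condExp_mul hfi hgi hfgi] with ω hpull hsplit
  rw [hpull, Pi.mul_apply, hsplit]
  rfl

theorem condExp_treatment_mixture {A Y0 Y1 w : Ω → ℝ} (c : ℝ) (hA : Measurable A)
    (hAbin : ∀ ω, A ω = 0 ∨ A ω = 1) (hY0 : Integrable Y0 μ) (hY1 : Integrable Y1 μ)
    (hexch0 : CondIndepFun m hm A Y0 μ) (hexch1 : CondIndepFun m hm A Y1 μ)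
    (hw : StronglyMeasurable[m] w) {C : ℝ} (hw_bdd : ∀ᵐ ω ∂μ, ‖w ω‖ ≤ C) :
    μ[c • (w * (A * Y1)) + w * ((1 - A) * Y0) | m]
      =ᵐ[μ] c • (w * (μ[A | m] * μ[Y1 | m])) + w * ((1 - μ[A | m]) * μ[Y0 | m]) := by
  have hA_bdd : ∀ᵐ ω ∂μ, ‖A ω‖ ≤ 1 :=
    ae_of_all _ fun ω => by rcases hAbin ω with h | h <;> simp [h]
  have hA'_bdd : ∀ᵐ ω ∂μ, ‖(1 - A) ω‖ ≤ 1 :=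
    ae_of_all _ fun ω => by rcases hAbin ω with h | h <;> simp [h]
  have hAi : Integrable A μ := (integrable_const 1).mono' hA.aestronglyMeasurable hA_bdd
  have hA'i : Integrable (1 - A) μ := (integrable_const 1).sub hAi
  have hAY1 : Integrable (A * Y1) μ := hY1.bdd_mul hA.aestronglyMeasurable hA_bdd
  have hAY0 : Integrable ((1 - A) * Y0) μ :=
    hY0.bdd_mul (measurable_const.sub hA).aestronglyMeasurable hA'_bdd
  have hwAY1 : Integrable (w * (A * Y1)) μ :=
    hAY1.bdd_mul (hw.mono hm).aestronglyMeasurable hw_bdd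
  have hwAY0 : Integrable (w * ((1 - A) * Y0)) μ :=
    hAY0.bdd_mul (hw.mono hm).aestronglyMeasurable hw_bdd
  have hexch0' : CondIndepFun m hm (1 - A) Y0 μ :=
    hexch0.comp (measurable_const.sub measurable_id) measurable_id
  filter_upwards [condExp_add (hwAY1.smul c) hwAY0 m, condExp_smul c (w * (A * Y1)) m,
    hexch1.condExp_mul_mul_of_stronglyMeasurable hw hAi hY1 hAY1 hwAY1,
    hexch0'.condExp_mul_mul_of_stronglyMeasurable hw hA'i hY0 hAY0 hwAY0,
    condExp_one_sub hm hAi] with ω hadd hsmul htreated huntreated hcompl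
  simp only [hadd, Pi.add_apply, hsmul, Pi.smul_apply, htreated, huntreated, Pi.mul_apply, hcompl]

end ProbabilityTheory

lemma min_le_mul_add_one_sub {δ p : ℝ} (hp : p ∈ Set.Icc 0 1) : min δ 1 ≤ δ * p + 1 - p := by
  nlinarith [min_le_left δ 1, min_le_right δ 1, hp.1, hp.2]

lemma mul_add_one_sub_pos {δ p : ℝ} (hδ : 0 < δ) (hp : p ∈ Set.Icc 0 1) :
    0 < δ * p + 1 - p :=
  (lt_min hδ one_pos).trans_le (min_le_mul_add_one_sub hp)

lemma norm_inv_mul_add_one_sub_le {δ p : ℝ} (hδ : 0 < δ) (hp : p ∈ Set.Icc 0 1) :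
    ‖(δ * p + 1 - p)⁻¹‖ ≤ (min δ 1)⁻¹ := by
  rw [norm_inv, Real.norm_of_nonneg (mul_add_one_sub_pos hδ hp).le]
  exact inv_anti₀ (lt_min hδ one_pos) (min_le_mul_add_one_sub hp)

lemma incremental_mixture_eq {δ p a b : ℝ} (hδ : 0 < δ) (hp : p ∈ Set.Icc 0 1) :
    δ * p / (δ * p + 1 - p) * a + (1 - δ * p / (δ * p + 1 - p)) * b
      = δ * ((δ * p + 1 - p)⁻¹ * (p * a)) + (δ * p + 1 - p)⁻¹ * ((1 - p) * b) := by
  have hD := (mul_add_one_sub_pos hδ hp).ne'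
  field_simp
  ring

theorem incremental_identification_weighting_form_general
    {Ω 𝒳 : Type*} [MeasurableSpace Ω] [StandardBorelSpace Ω]
    [MeasurableSpace 𝒳]
    (P : Measure Ω) [IsProbabilityMeasure P]
    (X : Ω → 𝒳) (A Y Y0 Y1 : Ω → ℝ)
    (hX : Measurable X) (hA : Measurable A)
    (hY0 : Integrable Y0 P) (hY1 : Integrable Y1 P)
    (hAbin : ∀ ω, A ω = 0 ∨ A ω = 1)
    -- consistency: Y = Yᴬ almost surely
    (hcons : ∀ᵐ ω ∂P, Y ω = if A ω = 1 then Y1 ω else Y0 ω)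
    -- exchangeability: A ⟂ Yᵃ | X for a = 0, 1
    (hexch0 : CondIndepFun (MeasurableSpace.comap X inferInstance) hX.comap_le A Y0 P)
    (hexch1 : CondIndepFun (MeasurableSpace.comap X inferInstance) hX.comap_le A Y1 P)
    -- π(x) = P(A = 1 | X = x)
    (π : 𝒳 → ℝ) (hπmeas : Measurable π)
    (hπ : (fun ω => π (X ω)) =ᵐ[P] P[A|MeasurableSpace.comap X inferInstance])
    (δ : ℝ) (hδ : 0 < δ) :
    ∫ ω, ((δ * π (X ω) / (δ * π (X ω) + 1 - π (X ω))) *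
            (P[Y1|MeasurableSpace.comap X inferInstance]) ω
        + (1 - δ * π (X ω) / (δ * π (X ω) + 1 - π (X ω))) *
            (P[Y0|MeasurableSpace.comap X inferInstance]) ω) ∂P
      = ∫ ω, Y ω * (δ * A ω + 1 - A ω) / (δ * π (X ω) + 1 - π (X ω)) ∂P := by
  have hm := hX.comap_le
  set m := MeasurableSpace.comap X (inferInstance : MeasurableSpace 𝒳)
  have hπ_mem : ∀ᵐ ω ∂P, π (X ω) ∈ Set.Icc 0 1 := by
    filter_upwards [hπ, condExp_mem_Icc_zero_one hm hA.aestronglyMeasurable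
      (ae_of_all _ fun ω => by rcases hAbin ω with h | h <;> simp [h])] with ω hπω hA_ω
    rwa [hπω]
  set w : Ω → ℝ := fun ω => (δ * π (X ω) + 1 - π (X ω))⁻¹
  have hw : StronglyMeasurable[m] w :=
    ((((hπmeas.const_mul δ).add_const 1).sub hπmeas).comp
      (comap_measurable X)).inv.stronglyMeasurable
  have hw_bdd : ∀ᵐ ω ∂P, ‖w ω‖ ≤ (min δ 1)⁻¹ := by
    filter_upwards [hπ_mem] with ω hp using norm_inv_mul_add_one_sub_le hδ hp
  have hweighted : (fun ω => Y ω * (δ * A ω + 1 - A ω) / (δ * π (X ω) + 1 - π (X ω)))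
      =ᵐ[P] δ • (w * (A * Y1)) + w * ((1 - A) * Y0) := by
    filter_upwards [hcons] with ω hω
    rcases hAbin ω with h | h <;> simp [hω, h, w] <;> ring
  calc _ = ∫ ω, (δ • (w * (P[A | m] * P[Y1 | m])) + w * ((1 - P[A | m]) * P[Y0 | m])) ω ∂P :=
        integral_congr_ae <| by
          filter_upwards [hπ, hπ_mem] with ω hπω hp
          simpa [w, ← hπω] using incremental_mixture_eq hδ hp
    _ = ∫ ω, (P[δ • (w * (A * Y1)) + w * ((1 - A) * Y0) | m]) ω ∂P :=
        integral_congr_ae (condExp_treatment_mixture δ hA hAbin hY0 hY1 hexch0 hexch1 hw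
          hw_bdd).symm
    _ = ∫ ω, (δ • (w * (A * Y1)) + w * ((1 - A) * Y0)) ω ∂P := integral_condExp hm
    _ = _ := integral_congr_ae hweighted.symm

/-- Identification of the incremental effect for one time point (weighting form).
Under consistency (`Y = Yᴬ` a.s.) and exchangeability (`A ⟂ Yᵃ | X`), the counterfactual
mean `E[Y^Q] = E[q(π(X);δ) E(Y¹|X) + (1-q(π(X);δ)) E(Y⁰|X)]` under the incremental
propensity score intervention `q(π;δ) = δπ/(δπ+1-π)` equals
`E[Y(δA + 1 - A)/(δπ(X) + 1 - π(X))]`. -/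
theorem incremental_identification_weighting_form
    {Ω 𝒳 : Type*} [MeasurableSpace Ω] [StandardBorelSpace Ω] [Nonempty Ω]
    [MeasurableSpace 𝒳]
    (P : Measure Ω) [IsProbabilityMeasure P]
    (X : Ω → 𝒳) (A Y Y0 Y1 : Ω → ℝ)
    (hX : Measurable X) (hA : Measurable A) (hY : Measurable Y)
    (hY0 : Integrable Y0 P) (hY1 : Integrable Y1 P)
    (hAbin : ∀ ω, A ω = 0 ∨ A ω = 1)
    -- consistency: Y = Yᴬ almost surely
    (hcons : ∀ᵐ ω ∂P, Y ω = if A ω = 1 then Y1 ω else Y0 ω)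
    -- exchangeability: A ⟂ Yᵃ | X for a = 0, 1
    (hexch0 : CondIndepFun (MeasurableSpace.comap X inferInstance) hX.comap_le A Y0 P)
    (hexch1 : CondIndepFun (MeasurableSpace.comap X inferInstance) hX.comap_le A Y1 P)
    -- π(x) = P(A = 1 | X = x)
    (π : 𝒳 → ℝ) (hπmeas : Measurable π)
    (hπ : (fun ω => π (X ω)) =ᵐ[P] P[A|MeasurableSpace.comap X inferInstance])
    (δ : ℝ) (hδ : 0 < δ) :
    ∫ ω, ((δ * π (X ω) / (δ * π (X ω) + 1 - π (X ω))) *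
            (P[Y1|MeasurableSpace.comap X inferInstance]) ω
        + (1 - δ * π (X ω) / (δ * π (X ω) + 1 - π (X ω))) *
            (P[Y0|MeasurableSpace.comap X inferInstance]) ω) ∂P
      = ∫ ω, Y ω * (δ * A ω + 1 - A ω) / (δ * π (X ω) + 1 - π (X ω)) ∂P :=
  incremental_identification_weighting_form_general P X A Y Y0 Y1 hX hA hY0 hY1 hAbin hcons hexch0
    hexch1 π hπmeas hπ δ hδ
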